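/- Let F_q be a finite field and n ≥ 1 an integer with gcd(2n, q) = 1, and let D_n be the dihedral group of order 2n. Then there exists no two-sided ideal C of the group algebra F_q[D_n] with 1 ≤ dim_{F_q}(C ∩ C^⊥) ≤ 8. -/

import Mathlib

open scoped BigOperators

namespace GroupCodeHulls

variable {K : Type*} [Field K] {G : Type*} [Group G]

/-- A (matrix) representation of `G` over `K` of degree `d`. -/
abbrev MatRep (K : Type*) [Field K] (G : Type*) [Group G] (d : ℕ) : Type _ :=
  G →* (Matrix (Fin d) (Fin d) K)ˣ

/-- A subspace `W ⊆ K^d` is invariant under the representation `ρ`. -/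
def IsInvariant {d : ℕ} (ρ : MatRep K G d) (W : Submodule K (Fin d → K)) : Prop :=
  ∀ g : G, ∀ x ∈ W, (ρ g : Matrix (Fin d) (Fin d) K).mulVec x ∈ W

/-- `ρ` is an irreducible representation. -/
def IsIrreducible {d : ℕ} (ρ : MatRep K G d) : Prop :=
  0 < d ∧ ∀ W : Submodule K (Fin d → K), IsInvariant ρ W → W = ⊥ ∨ W = ⊤

/-- Two representations are isomorphic. -/
def IsoRep {d₁ d₂ : ℕ} (ρ₁ : MatRep K G d₁) (ρ₂ : MatRep K G d₂) : Prop :=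
  ∃ T : (Fin d₁ → K) ≃ₗ[K] (Fin d₂ → K),
    ∀ (g : G) (x : Fin d₁ → K),
      T ((ρ₁ g : Matrix (Fin d₁) (Fin d₁) K).mulVec x)
        = (ρ₂ g : Matrix (Fin d₂) (Fin d₂) K).mulVec (T x)

/-- The character of a representation. -/
noncomputable def charOf {d : ℕ} (ρ : MatRep K G d) (g : G) : K :=
  Matrix.trace (ρ g : Matrix (Fin d) (Fin d) K)

/-- The element `e(ρ) = (d/|G|) ∑_g χ_ρ(g⁻¹) g` of the group algebra. -/
noncomputable def repIdem [Fintype G] {d : ℕ} (ρ : MatRep K G d) : MonoidAlgebra K G :=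
  ∑ g : G, MonoidAlgebra.single g ((d : K) * (Fintype.card G : K)⁻¹ * charOf ρ g⁻¹)

/-- The "transpose-inverse" of an invertible matrix, as a unit. -/
def contraUnit {n : Type*} [Fintype n] [DecidableEq n] (u : (Matrix n n K)ˣ) :
    (Matrix n n K)ˣ where
  val := Matrix.transpose (↑u⁻¹ : Matrix n n K)
  inv := Matrix.transpose (↑u : Matrix n n K)
  val_inv := by
    rw [← Matrix.transpose_mul, ← Units.val_mul, mul_inv_cancel, Units.val_one,
      Matrix.transpose_one]
  inv_val := by
    rw [← Matrix.transpose_mul, ← Units.val_mul, inv_mul_cancel, Units.val_one,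
      Matrix.transpose_one]

/-- The contragredient representation `g ↦ ᵀρ(g)⁻¹`. -/
def contra {d : ℕ} (ρ : MatRep K G d) : MatRep K G d where
  toFun g := contraUnit (ρ g)
  map_one' := by
    ext
    simp [contraUnit]
  map_mul' g h := by
    ext
    simp [contraUnit, mul_inv_rev, Matrix.transpose_mul]

/-- The Galois twist `σ ∘ ρ` of a representation. -/
def galConj {k : Type*} [Field k] [Algebra k K] (σ : K ≃ₐ[k] K) {d : ℕ}
    (ρ : MatRep K G d) : MatRep K G d :=
  (Units.map (AlgEquiv.mapMatrix σ :
      Matrix (Fin d) (Fin d) K ≃ₐ[k] Matrix (Fin d) (Fin d) K)) |>.comp ρ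

/-- `ρ₂` lies in the Galois orbit of (the isomorphism class of) `ρ₁`. -/
def SameOrbit (k : Type*) [Field k] [Algebra k K] {d₁ d₂ : ℕ}
    (ρ₁ : MatRep K G d₁) (ρ₂ : MatRep K G d₂) : Prop :=
  ∃ σ : K ≃ₐ[k] K, IsoRep (galConj σ ρ₁) ρ₂

/-- `τ 0, …, τ (s-1)` is a complete irredundant system of representatives of
the Galois orbit `[ρ]`; in particular `s = s(ρ)` is the size of the orbit. -/
def OrbitEnum (k : Type*) [Field k] [Algebra k K] {d : ℕ} (ρ : MatRep K G d)
    (s : ℕ) (τ : Fin s → MatRep K G d) : Prop :=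
  (∀ i, SameOrbit k ρ (τ i)) ∧
  (∀ i j, i ≠ j → ¬ IsoRep (τ i) (τ j)) ∧
  (∀ σ : K ≃ₐ[k] K, ∃ i, IsoRep (galConj σ ρ) (τ i))

/-- The star operation `(∑ f(g) g)* = ∑ f(g⁻¹) g` on the group algebra. -/
def starG (z : MonoidAlgebra K G) : MonoidAlgebra K G :=
  MonoidAlgebra.ofCoeff (Finsupp.equivMapDomain (Equiv.inv G) z.coeff)

/-- The Euclidean inner product on the group algebra with basis `G`. -/
noncomputable def eform [Fintype G] (u v : MonoidAlgebra K G) : K :=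
  ∑ g : G, u.coeff g * v.coeff g

/-- The underlying `K`-subspace of a two-sided ideal of `K[G]`. -/
def codeSub (C : TwoSidedIdeal (MonoidAlgebra K G)) :
    Submodule K (MonoidAlgebra K G) where
  carrier := C
  add_mem' := C.add_mem
  zero_mem' := C.zero_mem
  smul_mem' c x hx := by
    have h : (c • x : MonoidAlgebra K G) = algebraMap K (MonoidAlgebra K G) c * x :=
      Algebra.smul_def c x
    simpa [h] using C.mul_mem_left (algebraMap K (MonoidAlgebra K G) c) x hx

/-- The dual code of a two-sided ideal of `K[G]`, as a `K`-subspace. -/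
noncomputable def dualSub [Fintype G] (C : TwoSidedIdeal (MonoidAlgebra K G)) :
    Submodule K (MonoidAlgebra K G) where
  carrier := {v | ∀ u ∈ C, eform v u = 0}
  add_mem' := by
    intro a b ha hb u hu
    simp only [Set.mem_setOf_eq] at ha hb ⊢
    have h : eform (a + b) u = eform a u + eform b u := by
      unfold eform
      rw [← Finset.sum_add_distrib]
      exact Finset.sum_congr rfl fun g _ => by rw [MonoidAlgebra.coeff_add, Finsupp.add_apply, add_mul]
    rw [h, ha u hu, hb u hu, add_zero]
  zero_mem' := by
    intro u hu
    simp [eform]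
  smul_mem' := by
    intro c x hx u hu
    simp only [Set.mem_setOf_eq] at hx ⊢
    have h : eform (c • x) u = c * eform x u := by
      unfold eform
      rw [Finset.mul_sum]
      exact Finset.sum_congr rfl fun g _ => by
        rw [MonoidAlgebra.coeff_smul_apply, smul_eq_mul, mul_assoc]
    rw [h, hx u hu, mul_zero]

/-- The hull `h(C) = C ∩ C^⊥` of a group code. -/
noncomputable def hullSub [Fintype G] (C : TwoSidedIdeal (MonoidAlgebra K G)) :
    Submodule K (MonoidAlgebra K G) :=
  codeSub C ⊓ dualSub C

/-- The dimension of the hull of a group code. -/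
noncomputable def hullDim [Fintype G] (C : TwoSidedIdeal (MonoidAlgebra K G)) : ℕ :=
  Module.finrank K ↥(hullSub C)

section Aux

/-- A convenient induction principle for `MonoidAlgebra`. -/
lemma ma_induction {p : MonoidAlgebra K G → Prop} (f : MonoidAlgebra K G) (h0 : p 0)
    (hadd : ∀ a b, p a → p b → p (a + b))
    (hsingle : ∀ (g : G) (c : K), p (MonoidAlgebra.single g c)) : p f :=
  MonoidAlgebra.induction_linear f h0 hadd hsingle

lemma starG_apply (z : MonoidAlgebra K G) (g : G) : (starG z).coeff g = z.coeff g⁻¹ := rfl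

lemma starG_zero : starG (0 : MonoidAlgebra K G) = 0 := by
  ext g; rfl

lemma starG_add (a b : MonoidAlgebra K G) : starG (a + b) = starG a + starG b := by
  ext g; rfl

lemma starG_starG (a : MonoidAlgebra K G) : starG (starG a) = a := by
  ext g
  simp [starG_apply]

lemma starG_single (g : G) (c : K) :
    starG (MonoidAlgebra.single g c) = MonoidAlgebra.single g⁻¹ c := by
  simp [starG, MonoidAlgebra.coeff_single, Finsupp.equivMapDomain_single, MonoidAlgebra.ofCoeff_single]

lemma starG_mul (a b : MonoidAlgebra K G) : starG (a * b) = starG b * starG a := by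
  induction a using ma_induction with
  | h0 => simp [starG_zero]
  | hadd f g hf hg => rw [add_mul, starG_add, hf, hg, starG_add, mul_add]
  | hsingle g c =>
    induction b using ma_induction with
    | h0 => simp [starG_zero]
    | hadd f g' hf hg => rw [mul_add, starG_add, hf, hg, starG_add, add_mul]
    | hsingle h d =>
      rw [MonoidAlgebra.single_mul_single, starG_single, starG_single, starG_single,
        MonoidAlgebra.single_mul_single, mul_inv_rev, mul_comm c d]

variable [Fintype G]

lemma eform_add_left (a b u : MonoidAlgebra K G) :
    eform (a + b) u = eform a u + eform b u := by
  unfold eform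
  rw [← Finset.sum_add_distrib]
  exact Finset.sum_congr rfl fun g _ => by rw [MonoidAlgebra.coeff_add, Finsupp.add_apply, add_mul]

lemma eform_add_right (v a b : MonoidAlgebra K G) :
    eform v (a + b) = eform v a + eform v b := by
  unfold eform
  rw [← Finset.sum_add_distrib]
  exact Finset.sum_congr rfl fun g _ => by rw [MonoidAlgebra.coeff_add, Finsupp.add_apply, mul_add]

lemma eform_zero_left (u : MonoidAlgebra K G) : eform (0 : MonoidAlgebra K G) u = 0 := by
  simp [eform]

lemma eform_zero_right (v : MonoidAlgebra K G) : eform v (0 : MonoidAlgebra K G) = 0 := by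
  simp [eform]

lemma eform_single_right (v : MonoidAlgebra K G) (g : G) (c : K) :
    eform v (MonoidAlgebra.single g c) = v.coeff g * c := by
  classical
  simp only [eform, MonoidAlgebra.coeff_single_apply, mul_ite, mul_zero]
  rw [Finset.sum_ite_eq]
  simp

/-- Key adjunction: `⟨v·r, u⟩ = ⟨v, u·r*⟩`. -/
lemma eform_mul_right (v r u : MonoidAlgebra K G) :
    eform (v * r) u = eform v (u * starG r) := by
  induction r using ma_induction with
  | h0 => simp [starG_zero, eform_zero_left, eform_zero_right]
  | hadd a b ha hb =>
    rw [mul_add, eform_add_left, ha, hb, starG_add, mul_add, eform_add_right]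
  | hsingle h c =>
    rw [starG_single]
    simp only [eform, MonoidAlgebra.coeff_mul_single_apply, inv_inv]
    exact (Fintype.sum_equiv (Equiv.mulRight h)
      (fun y => v.coeff y * (u.coeff (y * h) * c))
      (fun x => v.coeff (x * h⁻¹) * c * u.coeff x)
      (fun y => by
        simp only [Equiv.coe_mulRight, mul_inv_cancel_right]
        ring)).symm

/-- Key adjunction: `⟨r·v, u⟩ = ⟨v, r*·u⟩`. -/
lemma eform_mul_left (r v u : MonoidAlgebra K G) :
    eform (r * v) u = eform v (starG r * u) := by
  induction r using ma_induction with
  | h0 => simp [starG_zero, eform_zero_left, eform_zero_right]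
  | hadd a b ha hb =>
    rw [add_mul, eform_add_left, ha, hb, starG_add, add_mul, eform_add_right]
  | hsingle h c =>
    rw [starG_single]
    simp only [eform, MonoidAlgebra.coeff_single_mul_apply, inv_inv]
    exact (Fintype.sum_equiv (Equiv.mulLeft h)
      (fun y => v.coeff y * (c * u.coeff (h * y)))
      (fun x => c * v.coeff (h⁻¹ * x) * u.coeff x)
      (fun y => by
        simp only [Equiv.coe_mulLeft, inv_mul_cancel_left]
        ring)).symm

end Aux

universe uF

lemma dihedral_semisimple (K : Type uF) [Field K] (m : ℕ) [NeZero m]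
    [NeZero ((2 * m : ℕ) : K)] :
    IsSemisimpleRing (MonoidAlgebra K (DihedralGroup m)) := by
  haveI : NeZero ((Nat.card (ULift.{uF} (DihedralGroup m)) : K)) := by
    constructor
    rw [Nat.card_eq_fintype_card, Fintype.card_ulift, DihedralGroup.card]
    exact NeZero.ne _
  haveI : IsSemisimpleRing (MonoidAlgebra K (ULift.{uF} (DihedralGroup m))) :=
    inferInstance
  exact ((MonoidAlgebra.domCongr K K
    (MulEquiv.ulift (α := DihedralGroup m))).toRingEquiv).isSemisimpleRing

/-- There is no group code in `F_q[D_n]` whose hull has dimension between `1` and `8`. -/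
theorem dihedral_no_small_hull (Fq : Type*) [Field Fq] [Fintype Fq] (n : ℕ) [NeZero n]
    (hco : Nat.Coprime (2 * n) (Fintype.card Fq)) :
    ¬ ∃ C : TwoSidedIdeal (MonoidAlgebra Fq (DihedralGroup n)),
        1 ≤ hullDim C ∧ hullDim C ≤ 8 := by
  classical
  rintro ⟨C, hge, _hle⟩
  set G := DihedralGroup n with hG
  set R := MonoidAlgebra Fq G with hR
  -- the characteristic does not divide 2n
  have hchar : ((2 * n : ℕ) : Fq) ≠ 0 := by
    intro h
    have h1 : ringChar Fq ∣ 2 * n := (CharP.cast_eq_zero_iff Fq (ringChar Fq) _).mp h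
    have h2 : ringChar Fq ∣ Fintype.card Fq :=
      (CharP.cast_eq_zero_iff Fq (ringChar Fq) _).mp (FiniteField.cast_card_eq_zero Fq)
    have hp : (ringChar Fq).Prime := CharP.char_is_prime Fq (ringChar Fq)
    exact hp.ne_one (Nat.dvd_one.mp (hco ▸ Nat.dvd_gcd h1 h2))
  haveI : NeZero ((2 * n : ℕ) : Fq) := ⟨hchar⟩
  haveI ss : IsSemisimpleRing R := dihedral_semisimple Fq n
  have memHull : ∀ x : R, x ∈ hullSub C ↔ x ∈ C ∧ ∀ u ∈ C, eform x u = 0 := by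
    intro x
    simp only [hullSub, Submodule.mem_inf]
    exact Iff.rfl
  -- hull is closed under left and right multiplication
  have hL : ∀ (r x : R), x ∈ hullSub C → r * x ∈ hullSub C := by
    intro r x hx
    rw [memHull] at hx ⊢
    refine ⟨C.mul_mem_left r x hx.1, ?_⟩
    intro u hu
    rw [eform_mul_left]
    exact hx.2 _ (C.mul_mem_left _ _ hu)
  have hRt : ∀ (r x : R), x ∈ hullSub C → x * r ∈ hullSub C := by
    intro r x hx
    rw [memHull] at hx ⊢
    refine ⟨C.mul_mem_right x r hx.1, ?_⟩
    intro u hu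
    rw [eform_mul_right]
    exact hx.2 _ (C.mul_mem_right _ _ hu)
  -- the hull as a left ideal
  let H : Submodule R R :=
    { carrier := hullSub C
      add_mem' := fun ha hb => (hullSub C).add_mem ha hb
      zero_mem' := (hullSub C).zero_mem
      smul_mem' := fun r x hx => by
        simpa [smul_eq_mul] using hL r x hx }
  -- the image of the hull under star, as a left ideal
  let H' : Submodule R R :=
    { carrier := {x | starG x ∈ hullSub C}
      add_mem' := fun {a b} ha hb => by
        show starG (a + b) ∈ hullSub C
        rw [starG_add]
        exact (hullSub C).add_mem ha hb
      zero_mem' := by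
        show starG (0 : R) ∈ hullSub C
        rw [starG_zero]
        exact (hullSub C).zero_mem
      smul_mem' := fun r x hx => by
        show starG (r • x) ∈ hullSub C
        rw [smul_eq_mul, starG_mul]
        exact hRt (starG r) _ hx }
  -- every left ideal closed under right multiplication has a right identity
  have exid : ∀ (J : Submodule R R), (∀ x ∈ J, ∀ r : R, x * r ∈ J) →
      ∃ e ∈ J, ∀ x ∈ J, x * e = x := by
    intro J hJr
    obtain ⟨U, hU⟩ := ComplementedLattice.exists_isCompl J
    have h1 : (1 : R) ∈ J ⊔ U := by rw [hU.sup_eq_top]; trivial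
    rw [Submodule.mem_sup] at h1
    obtain ⟨e, he, f, hf, hef⟩ := h1
    refine ⟨e, he, fun x hx => ?_⟩
    have hxfU : x * f ∈ U := by
      have h := U.smul_mem x hf
      rwa [smul_eq_mul] at h
    have hxfJ : x * f ∈ J := by
      have hxe : x * e ∈ J := hJr x hx e
      have : x * f = x - x * e := by
        have h : x * e + x * f = x := by rw [← mul_add, hef, mul_one]
        exact eq_sub_of_add_eq' h
      rw [this]
      exact J.sub_mem hx hxe
    have hxf0 : x * f = 0 := by
      have := hU.disjoint
      exact (Submodule.disjoint_def.mp this) _ hxfJ hxfU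
    have hsum : x * e + x * f = x := by rw [← mul_add, hef, mul_one]
    rw [hxf0, add_zero] at hsum
    exact hsum
  obtain ⟨e, heH, he⟩ := exid H (fun x hx r => hRt r x hx)
  obtain ⟨e', he'H, he'⟩ := exid H' (fun x hx r => by
    show starG (x * r) ∈ hullSub C
    rw [starG_mul]
    exact hL (starG r) _ hx)
  -- f := starG e' is a left identity of the hull
  have hfH : starG e' ∈ hullSub C := he'H
  have hfl : ∀ x ∈ hullSub C, starG e' * x = x := by
    intro x hx
    have hx' : starG x ∈ H' := by
      show starG (starG x) ∈ hullSub C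
      rw [starG_starG]
      exact hx
    have h2 := congrArg starG (he' (starG x) hx')
    rwa [starG_mul, starG_starG] at h2
  -- hence e = starG e' is a two-sided identity of the hull
  have hef : e = starG e' := by
    have h1 : starG e' * e = e := hfl e heH
    have h2 : starG e' * e = starG e' := he _ hfH
    rw [← h1, h2]
  have hel : ∀ x ∈ hullSub C, e * x = x := by
    rw [hef]; exact hfl
  -- e is central
  have hcentral : ∀ r : R, e * r = r * e := by
    intro r
    have h1 : (e * r) * e = e * r := he _ (hRt r e heH)
    have h2 : e * (r * e) = r * e := hel _ (hL r e heH)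
    rw [mul_assoc] at h1
    rw [← h1, h2]
  -- hence its coefficients are constant on conjugacy classes
  have hconj : ∀ g h : G, e.coeff (h * g * h⁻¹) = e.coeff g := by
    intro g h
    have hc : (e * MonoidAlgebra.single h (1 : Fq)).coeff (h * g)
        = (MonoidAlgebra.single h (1 : Fq) * e).coeff (h * g) := by
      rw [hcentral (MonoidAlgebra.single h 1)]
    rw [MonoidAlgebra.coeff_mul_single_apply, MonoidAlgebra.coeff_single_mul_apply, one_mul, mul_one,
      inv_mul_cancel_left] at hc
    exact hc
  -- the dihedral group is ambivalent, so starG e = e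
  have hstar : starG e = e := by
    ext g
    rw [starG_apply]
    rcases g with i | i
    · have hinv : (DihedralGroup.r i)⁻¹ = DihedralGroup.r (-i) := rfl
      have hc : DihedralGroup.sr 0 * DihedralGroup.r i * (DihedralGroup.sr (0 : ZMod n))⁻¹
          = DihedralGroup.r (-i) := by
        have hsrinv : (DihedralGroup.sr (0 : ZMod n))⁻¹ = DihedralGroup.sr 0 := rfl
        rw [hsrinv, DihedralGroup.sr_mul_r, DihedralGroup.sr_mul_sr]
        rw [zero_add, zero_sub]
      rw [hinv, ← hc, hconj]
    · have hinv : (DihedralGroup.sr i)⁻¹ = DihedralGroup.sr i := rfl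
      rw [hinv]
  -- conclude: any element of the hull is zero
  have hzero : ∀ u ∈ hullSub C, u = 0 := by
    intro u hu
    have hue : u * e = u := he u hu
    have heC : e ∈ C := ((memHull e).mp heH).1
    ext g
    have hC : MonoidAlgebra.single g (1 : Fq) * e ∈ C := C.mul_mem_left _ _ heC
    have h0 : eform u (MonoidAlgebra.single g (1 : Fq) * e) = 0 :=
      ((memHull u).mp hu).2 _ hC
    have h1 : eform (u * e) (MonoidAlgebra.single g (1 : Fq))
        = eform u (MonoidAlgebra.single g (1 : Fq) * starG e) :=
      eform_mul_right u e (MonoidAlgebra.single g (1 : Fq))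
    rw [hue, hstar] at h1
    have h2 : eform u (MonoidAlgebra.single g (1 : Fq)) = 0 := h1.trans h0
    have h3 : eform u (MonoidAlgebra.single g (1 : Fq)) = u.coeff g * 1 :=
      eform_single_right u g 1
    rw [h2] at h3
    simpa using h3.symm
  have hbot : hullSub C = ⊥ := by
    rw [Submodule.eq_bot_iff]
    exact hzero
  have hdim : hullDim C = 0 := by
    rw [hullDim, hbot]
    exact finrank_bot Fq R
  omega


end GroupCodeHulls
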